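/- arXiv:2302.02395 — 2 statements merged into one kernel-verified Lean document; each statement's English description precedes it below -/
import Mathlib

section
/- For all real numbers a, b and every exponent ν with 0 < ν < 1, the signed power function ⟨x⟩^ν := sign(x)·|x|^ν satisfies |⟨a⟩^ν − ⟨b⟩^ν| ≤ 2^{1−ν} · |a − b|^ν. -/
open Real NNReal

lemma real_rpow_add_le_add_rpow {ν : ℝ} (hν0 : 0 < ν) (hν1 : ν < 1)
    {x y : ℝ} (hx : 0 ≤ x) (hy : 0 ≤ y) : (x + y) ^ ν ≤ x ^ ν + y ^ ν := by
  have h := NNReal.rpow_add_le_add_rpow x.toNNReal y.toNNReal hν0.le hν1.le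
  have := NNReal.coe_le_coe.2 h
  push_cast at this
  rwa [Real.coe_toNNReal x hx, Real.coe_toNNReal y hy] at this

lemma add_rpow_le_two_rpow {ν : ℝ} (hν0 : 0 < ν) (hν1 : ν < 1)
    {x y : ℝ} (hx : 0 ≤ x) (hy : 0 ≤ y) :
    x ^ ν + y ^ ν ≤ 2 ^ (1 - ν) * (x + y) ^ ν := by
  set X := x.toNNReal
  set Y := y.toNNReal
  have hp : (1 : ℝ) ≤ 1 / ν := one_le_one_div hν0 hν1.le
  have h := NNReal.rpow_add_le_mul_rpow_add_rpow (X ^ ν) (Y ^ ν) hp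
  have hcancel : ∀ Z : ℝ≥0, (Z ^ ν) ^ (1 / ν) = Z := fun Z => by
    rw [← NNReal.rpow_mul, mul_one_div, div_self hν0.ne', NNReal.rpow_one]
  rw [hcancel X, hcancel Y] at h
  have hmono := NNReal.rpow_le_rpow h hν0.le
  rw [← NNReal.rpow_mul, one_div_mul_cancel hν0.ne', NNReal.rpow_one,
    NNReal.mul_rpow, ← NNReal.rpow_mul] at hmono
  have he : (1 / ν - 1) * ν = 1 - ν := by field_simp
  rw [he] at hmono
  have := NNReal.coe_le_coe.2 hmono
  push_cast at this
  rwa [Real.coe_toNNReal x hx, Real.coe_toNNReal y hy] at this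

lemma abs_rpow_sub_rpow_le {ν : ℝ} (hν0 : 0 < ν) (hν1 : ν < 1)
    {x y : ℝ} (hx : 0 ≤ x) (hy : 0 ≤ y) : |x ^ ν - y ^ ν| ≤ |x - y| ^ ν := by
  wlog hxy : y ≤ x generalizing x y
  · rw [abs_sub_comm, abs_sub_comm x y]; exact this hy hx (le_of_not_ge hxy)
  rw [abs_of_nonneg (sub_nonneg.2 hxy), abs_of_nonneg
    (sub_nonneg.2 (Real.rpow_le_rpow hy hxy hν0.le)), sub_le_iff_le_add]
  calc x ^ ν = ((x - y) + y) ^ ν := by ring_nf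
    _ ≤ (x - y) ^ ν + y ^ ν :=
        real_rpow_add_le_add_rpow hν0 hν1 (sub_nonneg.2 hxy) hy

/-- The signed power function `⟨x⟩^s = sign(x)·|x|^s`. -/
noncomputable def sgnPow (x s : ℝ) : ℝ := Real.sign x * |x| ^ s

lemma sgnPow_of_nonneg {x : ℝ} (hx : 0 ≤ x) {s : ℝ} (hs : 0 < s) :
    sgnPow x s = x ^ s := by
  rcases hx.eq_or_lt with rfl | hx
  · simp [sgnPow, Real.zero_rpow hs.ne']
  · rw [sgnPow, Real.sign_of_pos hx, abs_of_pos hx, one_mul]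

lemma sgnPow_neg' {x : ℝ} (hx : x < 0) {s : ℝ} : sgnPow x s = -((-x) ^ s) := by
  rw [sgnPow, Real.sign_of_neg hx, abs_of_neg hx, neg_one_mul]

theorem stmt_0 (a b ν : ℝ) (hν0 : 0 < ν) (hν1 : ν < 1) :
    |sgnPow a ν - sgnPow b ν| ≤ 2 ^ (1 - ν) * |a - b| ^ ν := by
  have h2 : (1 : ℝ) ≤ 2 ^ (1 - ν) :=
    Real.one_le_rpow (by norm_num) (by linarith)
  have key : ∀ x y : ℝ, 0 ≤ x → 0 ≤ y →
      |x ^ ν - y ^ ν| ≤ 2 ^ (1 - ν) * |x - y| ^ ν := by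
    intro x y hx hy
    calc |x ^ ν - y ^ ν| ≤ |x - y| ^ ν := abs_rpow_sub_rpow_le hν0 hν1 hx hy
      _ ≤ 2 ^ (1 - ν) * |x - y| ^ ν := by
          nth_rw 1 [← one_mul (|x - y| ^ ν)]
          exact mul_le_mul_of_nonneg_right h2 (by positivity)
  rcases le_or_gt 0 a with ha | ha <;> rcases le_or_gt 0 b with hb | hb
  · rw [sgnPow_of_nonneg ha hν0, sgnPow_of_nonneg hb hν0]
    exact key a b ha hb
  · -- a ≥ 0, b < 0
    have hb' : (0:ℝ) ≤ -b := by linarith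
    rw [sgnPow_of_nonneg ha hν0, sgnPow_neg' hb, sub_neg_eq_add,
      abs_of_nonneg (add_nonneg (Real.rpow_nonneg ha _) (Real.rpow_nonneg hb' _)),
      abs_of_nonneg (by linarith)]
    have := add_rpow_le_two_rpow hν0 hν1 ha hb' 
    calc a ^ ν + (-b) ^ ν ≤ 2 ^ (1 - ν) * (a + -b) ^ ν := this
      _ = 2 ^ (1 - ν) * (a - b) ^ ν := by ring_nf
  · -- a < 0, b ≥ 0
    have ha' : (0:ℝ) ≤ -a := by linarith
    rw [sgnPow_neg' ha, sgnPow_of_nonneg hb hν0, abs_sub_comm,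
      sub_neg_eq_add, abs_of_nonneg (add_nonneg (Real.rpow_nonneg hb _) (Real.rpow_nonneg ha' _)),
      abs_of_nonpos (by linarith)]
    have := add_rpow_le_two_rpow hν0 hν1 hb ha' 
    calc b ^ ν + (-a) ^ ν ≤ 2 ^ (1 - ν) * (b + -a) ^ ν := this
      _ = 2 ^ (1 - ν) * (-(a - b)) ^ ν := by ring_nf
  · rw [sgnPow_neg' ha, sgnPow_neg' hb]
    have := key (-a) (-b) (by linarith) (by linarith)
    rw [neg_sub_neg, abs_sub_comm b a] at this
    rw [show -((-a) ^ ν) - -((-b) ^ ν) = (-b) ^ ν - (-a) ^ ν by ring, abs_sub_comm]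
    exact this
end

section
/- Let n ≥ 1, ν ∈ (1 − 1/(2n−1), 1), d₀ = 1 − ν, w_i = (i−1)ν − (i−2), and let μ satisfy max{1, 2w_{n+1}} < μ < d₀ + 2w_{n+1}. Then for every i = 1, …, n+1, the exponent w_i/(μ − d₀) is strictly greater than 1/2. Consequently n + 1 + w_i/(μ − d₀) − i > n + 3/2 − i. -/
theorem stmt_7 (n : ℕ) (hn : 1 ≤ n) (ν : ℝ)
    (hν1 : 1 - 1 / (2 * (n : ℝ) - 1) < ν) (hν2 : ν < 1)
    (d₀ : ℝ) (hd₀ : d₀ = 1 - ν)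
    (w : ℕ → ℝ) (hw : ∀ i, w i = ((i : ℝ) - 1) * ν - ((i : ℝ) - 2))
    (μ : ℝ) (hμ1 : max 1 (2 * w (n + 1)) < μ) (hμ2 : μ < d₀ + 2 * w (n + 1)) :
    ∀ i, 1 ≤ i → i ≤ n + 1 →
      1 / 2 < w i / (μ - d₀) ∧
      (n : ℝ) + 3 / 2 - (i : ℝ) < (n : ℝ) + 1 + w i / (μ - d₀) - (i : ℝ) := by
  intro i hi1 hi2
  have hn1 : (1 : ℝ) ≤ (n : ℝ) := by exact_mod_cast hn
  have h2n : (0 : ℝ) < 2 * (n : ℝ) - 1 := by linarith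
  have hμ1' : (1 : ℝ) < μ := lt_of_le_of_lt (le_max_left _ _) hμ1
  have hμd : 0 < μ - d₀ := by
    have : 0 < ν := by
      have h1 : 1 / (2 * (n : ℝ) - 1) ≤ 1 := by
        rw [div_le_one h2n]; linarith
      linarith
    rw [hd₀]; linarith
  have hwn1 : w (n + 1) = (n : ℝ) * ν - ((n : ℝ) - 1) := by
    rw [hw]; push_cast; ring
  have hWpos : 0 < w (n + 1) := by
    rw [hwn1]
    have h1 : 1 - 1 / (2 * (n : ℝ) - 1) ≥ 1 - 1 / (n : ℝ) := by
      have : 1 / (2 * (n : ℝ) - 1) ≤ 1 / (n : ℝ) := by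
        apply one_div_le_one_div_of_le (by linarith) (by linarith)
      linarith
    have hν : 1 - 1 / (n : ℝ) < ν := lt_of_le_of_lt h1 hν1
    have hn0 : (0 : ℝ) < n := by linarith
    have h2 : (1 - 1 / (n : ℝ)) * n = n - 1 := by field_simp
    nlinarith [mul_lt_mul_of_pos_right hν hn0]
  have hile : (i : ℝ) ≤ (n : ℝ) + 1 := by exact_mod_cast hi2
  have hwi : w (n + 1) ≤ w i := by
    rw [hw i, hwn1]; nlinarith
  have hkey : 1 / 2 < w i / (μ - d₀) := by
    rw [lt_div_iff₀ hμd]; linarith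
  exact ⟨hkey, by linarith⟩
end
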